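/- arXiv:2303.14658 — 2 statements merged into one kernel-verified Lean document; each statement's English description precedes it below -/
import Mathlib

section
/- Let 0 < c < 1 and β ∈ [0,1), suppose 0 < R, and suppose the (v,c)-central condition holds with v(ε) = ε^{1−β}: for every ε > 0, log ∫ exp(−ε^{1−β}·r) d(P_W ⊗ μ) ≤ −c·ε^{1−β}·R + ε^{2−β}. Then the expected generalization error satisfies the intermediate-rate bound gen ≤ ((1 − c)/c)·R̂ + ((1−β)^{1/(2−β)}·(2−β)/(c·(1−β)))·(1/n) ∑_{i=1}^n I(W;Z_i)^{1/(2−β)}. -/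
/-!
Let `r` be the excess loss and `P_i` the joint law of `(W, Z_i)`. The Donsker–Varadhan
inequality for `P_i` against `P_W ⊗ μ` with `f = -ε ^ (1 - β) r`, combined with the central
condition, gives `c R - E_{P_i}[r] ≤ ε + I(W;Z_i) ε ^ (β - 1)` for all `ε > 0`; optimising over
`ε` yields `c R - E_{P_i}[r] ≤ C I(W;Z_i) ^ (1 / (2 - β))`. Averaging over `i` turns
`E_{P_i}[r]` into `R̂`. Since the sample has the product law, `E L̂(w*, S_n) = L(w*)`, so
`gen = R - R̂`, and solving `c R - R̂ ≤ C Ī` for `R - R̂` gives the bound.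
-/

open MeasureTheory Real

/-- Real-valued Kullback–Leibler divergence `D(P‖Q)`,
the integral of the log-likelihood ratio with respect to `P`. -/
noncomputable def klReal {α : Type*} [MeasurableSpace α] (P Q : Measure α) : ℝ :=
  ∫ x, llr P Q x ∂P

variable {W Z : Type*} [MeasurableSpace W] [MeasurableSpace Z]

/-- Population risk `L(w) = ∫ ℓ(w,z) dμ(z)`. -/
noncomputable def popRisk (μ : Measure Z) (ℓ : W × Z → ℝ) (w : W) : ℝ :=
  ∫ z, ℓ (w, z) ∂μ

/-- Empirical risk `L̂(w,s) = (1/n) ∑ i, ℓ(w, s i)`. -/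
noncomputable def empRisk (n : ℕ) (ℓ : W × Z → ℝ) (w : W) (s : Fin n → Z) : ℝ :=
  (1 / (n : ℝ)) * ∑ i, ℓ (w, s i)

/-- Expected generalization error `gen = E_P[L(W) − L̂(W,S_n)]`. -/
noncomputable def genErr (μ : Measure Z) (n : ℕ) (P : Measure (W × (Fin n → Z)))
    (ℓ : W × Z → ℝ) : ℝ :=
  ∫ p, (popRisk μ ℓ p.1 - empRisk n ℓ p.1 p.2) ∂P

/-- Expected empirical excess risk `R̂ = E_P[L̂(W,S_n) − L̂(w*,S_n)]`. -/
noncomputable def empExcess (n : ℕ) (P : Measure (W × (Fin n → Z)))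
    (ℓ : W × Z → ℝ) (wstar : W) : ℝ :=
  ∫ p, (empRisk n ℓ p.1 p.2 - empRisk n ℓ wstar p.2) ∂P

/-- Expected excess risk `R = ∫ r d(P_W ⊗ μ)` where `r(w,z) = ℓ(w,z) − ℓ(w*,z)`. -/
noncomputable def excessRisk (μ : Measure Z) {n : ℕ} (P : Measure (W × (Fin n → Z)))
    (ℓ : W × Z → ℝ) (wstar : W) : ℝ :=
  ∫ p, (ℓ p - ℓ (wstar, p.2)) ∂((P.map Prod.fst).prod μ)

/-- Joint law `P_i` of `(W, Z_i)`: the pushforward of `P` under `(w,z) ↦ (w, z_i)`. -/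
noncomputable def jointLaw {n : ℕ} (P : Measure (W × (Fin n → Z))) (i : Fin n) :
    Measure (W × Z) :=
  P.map fun p => (p.1, p.2 i)

/-- Mutual information `I(W;Z_i) = D(P_i ‖ P_W ⊗ μ)`. -/
noncomputable def mutInfo (μ : Measure Z) {n : ℕ} (P : Measure (W × (Fin n → Z)))
    (i : Fin n) : ℝ :=
  klReal (jointLaw P i) ((P.map Prod.fst).prod μ)

/-- The infimum over `ε > 0` of `ε + I ε ^ (β - 1)` is attained at
`ε = ((1 - β) I) ^ (1 / (2 - β))`. -/
lemma le_mul_rpow_of_forall_le_add_mul_rpow {β I D : ℝ} (hβ : β < 1) (hI : 0 ≤ I)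
    (h : ∀ ε : ℝ, 0 < ε → D ≤ ε + I * ε ^ (β - 1)) :
    D ≤ ((1 - β) ^ ((1 : ℝ) / (2 - β)) * (2 - β) / (1 - β)) *
      I ^ ((1 : ℝ) / (2 - β)) := by
  have h2β : 0 < 2 - β := by linarith
  have h1β : 0 < 1 - β := by linarith
  rcases hI.eq_or_lt with rfl | hIpos
  · rw [zero_rpow (by positivity), mul_zero]
    exact le_of_forall_pos_le_add fun ε hε => by simpa using h ε hε
  · have hx : 0 < (1 - β) * I := mul_pos h1β hIpos
    refine (h _ (rpow_pos_of_pos hx ((1 : ℝ) / (2 - β)))).trans_eq ?_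
    have hexp : (1 : ℝ) / (2 - β) * (β - 1) = 1 / (2 - β) - 1 := by
      field_simp
      ring
    rw [← rpow_mul hx.le, hexp, rpow_sub hx, rpow_one, mul_rpow h1β.le hI]
    field_simp
    ring

section KullbackLeibler

variable {α : Type*} [MeasurableSpace α] {P Q : Measure α}

lemma klReal_nonneg [IsProbabilityMeasure P] [IsProbabilityMeasure Q] (hPQ : P ≪ Q)
    (hllr : Integrable (llr P Q) P) : 0 ≤ klReal P Q := by
  simpa [klReal] using InformationTheory.integral_llr_add_sub_measure_univ_nonneg hPQ hllr

/-- Donsker–Varadhan: Gibbs' inequality for `P` against the tilted measure `Q.tilted f`. -/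
lemma integral_le_klReal_add_log_integral_exp [IsProbabilityMeasure P]
    [IsProbabilityMeasure Q] (hPQ : P ≪ Q) (hllr : Integrable (llr P Q) P) {f : α → ℝ}
    (hfP : Integrable f P) (hfQ : Integrable (fun x => exp (f x)) Q) :
    ∫ x, f x ∂P ≤ klReal P Q + log (∫ x, exp (f x) ∂Q) := by
  have : IsProbabilityMeasure (Q.tilted f) := isProbabilityMeasure_tilted hfQ
  have h := klReal_nonneg (hPQ.trans (absolutelyContinuous_tilted hfQ))
    (integrable_llr_tilted_right hPQ hfP hllr hfQ)
  rw [klReal, integral_llr_tilted_right hPQ hfP hfQ hllr] at h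
  rw [klReal]
  linarith

lemma mul_sub_integral_le_of_central [IsProbabilityMeasure P] [IsProbabilityMeasure Q]
    (hPQ : P ≪ Q) (hllr : Integrable (llr P Q) P) {r : α → ℝ} (hr : Integrable r P)
    {β c R : ℝ} (hβ : β < 1)
    (hmgf : ∀ ε : ℝ, 0 < ε → Integrable (fun x => exp (-(ε ^ (1 - β)) * r x)) Q)
    (hcentral : ∀ ε : ℝ, 0 < ε →
      log (∫ x, exp (-(ε ^ (1 - β)) * r x) ∂Q) ≤ -c * ε ^ (1 - β) * R + ε ^ (2 - β)) :
    c * R - ∫ x, r x ∂P ≤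
      ((1 - β) ^ ((1 : ℝ) / (2 - β)) * (2 - β) / (1 - β)) *
        klReal P Q ^ ((1 : ℝ) / (2 - β)) := by
  refine le_mul_rpow_of_forall_le_add_mul_rpow hβ (klReal_nonneg hPQ hllr) fun ε hε => ?_
  set t := ε ^ (1 - β) with ht
  have htpos : 0 < t := rpow_pos_of_pos hε _
  have hdv := integral_le_klReal_add_log_integral_exp hPQ hllr (hr.const_mul (-t)) (hmgf ε hε)
  rw [integral_const_mul] at hdv
  have hpow : ε ^ (2 - β) = t * ε := by
    rw [ht, ← rpow_add_one hε.ne']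
    ring_nf
  have hinv : ε ^ (β - 1) = t⁻¹ := by
    rw [ht, ← rpow_neg hε.le, neg_sub]
  have key : t * (c * R - ∫ x, r x ∂P) ≤ t * (ε + klReal P Q * t⁻¹) := by
    rw [mul_add, mul_left_comm, mul_inv_cancel₀ htpos.ne', mul_one]
    linarith [hcentral ε hε]
  rw [hinv]
  exact le_of_mul_le_mul_left key htpos

end KullbackLeibler

section Learning

variable {μ : Measure Z} {n : ℕ} {P : Measure (W × (Fin n → Z))} {ℓ : W × Z → ℝ}

lemma measurable_fst_prodMk_eval_snd (i : Fin n) :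
    Measurable fun p : W × (Fin n → Z) => (p.1, p.2 i) := by
  fun_prop

lemma map_eval_snd_eq_of_map_snd_eq_pi [IsProbabilityMeasure μ]
    (hmarg : P.map Prod.snd = Measure.pi fun _ : Fin n => μ) (i : Fin n) :
    P.map (fun p => p.2 i) = μ := by
  classical
  rw [show (fun p : W × (Fin n → Z) => p.2 i) = Function.eval i ∘ Prod.snd from rfl,
    ← Measure.map_map (measurable_pi_apply i) measurable_snd, hmarg, Measure.pi_map_eval]
  simp

lemma jointLaw_map_snd [IsProbabilityMeasure μ]
    (hmarg : P.map Prod.snd = Measure.pi fun _ : Fin n => μ) (i : Fin n) :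
    (jointLaw P i).map Prod.snd = μ := by
  rw [jointLaw, Measure.map_map measurable_snd (measurable_fst_prodMk_eval_snd i)]
  exact map_eval_snd_eq_of_map_snd_eq_pi hmarg i

lemma integral_jointLaw {f : W × Z → ℝ} {i : Fin n}
    (hf : AEStronglyMeasurable f (jointLaw P i)) :
    ∫ p, f p ∂(jointLaw P i) = ∫ p, f (p.1, p.2 i) ∂P :=
  integral_map (measurable_fst_prodMk_eval_snd i).aemeasurable hf

lemma MeasureTheory.Integrable.comp_jointLaw {f : W × Z → ℝ} {i : Fin n}
    (hf : Integrable f (jointLaw P i)) : Integrable (fun p => f (p.1, p.2 i)) P :=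
  hf.comp_measurable (measurable_fst_prodMk_eval_snd i)

lemma integrable_excessLoss_jointLaw [IsProbabilityMeasure μ]
    (hmarg : P.map Prod.snd = Measure.pi fun _ : Fin n => μ) {wstar : W}
    (hintw : Integrable (fun z => ℓ (wstar, z)) μ) {i : Fin n}
    (hinti : Integrable ℓ (jointLaw P i)) :
    Integrable (fun p => ℓ p - ℓ (wstar, p.2)) (jointLaw P i) := by
  refine hinti.sub ?_
  rw [← jointLaw_map_snd hmarg i] at hintw
  exact hintw.comp_measurable measurable_snd

lemma integrable_empRisk {f : W × (Fin n → Z) → W}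
    (h : ∀ i, Integrable (fun p => ℓ (f p, p.2 i)) P) :
    Integrable (fun p => empRisk n ℓ (f p) p.2) P :=
  (integrable_finsetSum _ fun i _ => h i).const_mul _

lemma integral_empRisk {f : W × (Fin n → Z) → W}
    (h : ∀ i, Integrable (fun p => ℓ (f p, p.2 i)) P) :
    ∫ p, empRisk n ℓ (f p) p.2 ∂P =
      (1 / (n : ℝ)) * ∑ i, ∫ p, ℓ (f p, p.2 i) ∂P := by
  simp only [empRisk]
  rw [integral_const_mul, integral_finsetSum _ fun i _ => h i]

lemma integrable_comp_eval_snd_of_map_snd_eq_pi [IsProbabilityMeasure μ]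
    (hmarg : P.map Prod.snd = Measure.pi fun _ : Fin n => μ) {g : Z → ℝ} (hg : Integrable g μ)
    (i : Fin n) : Integrable (fun p => g (p.2 i)) P := by
  rw [← map_eval_snd_eq_of_map_snd_eq_pi hmarg i] at hg
  exact hg.comp_measurable (by fun_prop)

lemma integral_comp_eval_snd_of_map_snd_eq_pi [IsProbabilityMeasure μ]
    (hmarg : P.map Prod.snd = Measure.pi fun _ : Fin n => μ) {g : Z → ℝ}
    (hg : AEStronglyMeasurable g μ) (i : Fin n) : ∫ p, g (p.2 i) ∂P = ∫ z, g z ∂μ := by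
  rw [← map_eval_snd_eq_of_map_snd_eq_pi hmarg i] at hg ⊢
  exact (integral_map (by fun_prop) hg).symm

lemma integral_empRisk_const_eq_popRisk [IsProbabilityMeasure μ] (hn : 0 < n)
    (hmarg : P.map Prod.snd = Measure.pi fun _ : Fin n => μ) {w : W}
    (hw : Integrable (fun z => ℓ (w, z)) μ) :
    ∫ p, empRisk n ℓ w p.2 ∂P = popRisk μ ℓ w := by
  rw [integral_empRisk (f := fun _ => w) (integrable_comp_eval_snd_of_map_snd_eq_pi hmarg hw)]
  simp only [integral_comp_eval_snd_of_map_snd_eq_pi hmarg hw.1, Finset.sum_const,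
    Finset.card_univ, Fintype.card_fin, nsmul_eq_mul, popRisk]
  field_simp

lemma integrable_popRisk_fst [SFinite μ] (hint : Integrable ℓ ((P.map Prod.fst).prod μ)) :
    Integrable (fun p => popRisk μ ℓ p.1) P :=
  hint.integral_prod_left.comp_measurable measurable_fst

lemma integral_popRisk_fst [SFinite μ] [IsFiniteMeasure P]
    (hint : Integrable ℓ ((P.map Prod.fst).prod μ)) :
    ∫ p, popRisk μ ℓ p.1 ∂P = ∫ p, ℓ p ∂((P.map Prod.fst).prod μ) := by
  rw [integral_prod _ hint]
  exact (integral_map measurable_fst.aemeasurable hint.integral_prod_left.1).symm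

lemma excessRisk_eq_sub [SFinite μ] [IsProbabilityMeasure P] {wstar : W}
    (hint : Integrable ℓ ((P.map Prod.fst).prod μ))
    (hintw : Integrable (fun z => ℓ (wstar, z)) μ) :
    excessRisk μ P ℓ wstar = ∫ p, ℓ p ∂((P.map Prod.fst).prod μ) - popRisk μ ℓ wstar := by
  have : IsProbabilityMeasure (P.map Prod.fst) := Measure.isProbabilityMeasure_map (by fun_prop)
  rw [excessRisk, integral_sub hint (hintw.comp_snd _), integral_fun_snd (fun z => ℓ (wstar, z))]
  simp [popRisk]

lemma genErr_eq_excessRisk_sub_empExcess [IsProbabilityMeasure μ] [IsProbabilityMeasure P]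
    (hn : 0 < n) (hmarg : P.map Prod.snd = Measure.pi fun _ : Fin n => μ) {wstar : W}
    (hint : Integrable ℓ ((P.map Prod.fst).prod μ)) (hinti : ∀ i, Integrable ℓ (jointLaw P i))
    (hintw : Integrable (fun z => ℓ (wstar, z)) μ) :
    genErr μ n P ℓ = excessRisk μ P ℓ wstar - empExcess n P ℓ wstar := by
  have hemp := integrable_empRisk (f := Prod.fst) fun i => (hinti i).comp_jointLaw
  have hempw := integrable_empRisk (f := fun _ => wstar)
    (integrable_comp_eval_snd_of_map_snd_eq_pi hmarg hintw)
  rw [genErr, empExcess, integral_sub (integrable_popRisk_fst hint) hemp,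
    integral_sub hemp hempw, integral_popRisk_fst hint,
    integral_empRisk_const_eq_popRisk hn hmarg hintw, excessRisk_eq_sub hint hintw]
  ring

lemma empExcess_eq_average [IsProbabilityMeasure μ]
    (hmarg : P.map Prod.snd = Measure.pi fun _ : Fin n => μ) {wstar : W}
    (hinti : ∀ i, Integrable ℓ (jointLaw P i)) (hintw : Integrable (fun z => ℓ (wstar, z)) μ) :
    empExcess n P ℓ wstar =
      (1 / (n : ℝ)) * ∑ i, ∫ p, (ℓ p - ℓ (wstar, p.2)) ∂(jointLaw P i) := by
  have hloss : ∀ i, Integrable (fun p => ℓ (p.1, p.2 i)) P := fun i => (hinti i).comp_jointLaw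
  have hlossw := integrable_comp_eval_snd_of_map_snd_eq_pi hmarg hintw
  rw [empExcess, integral_sub (integrable_empRisk (f := Prod.fst) hloss)
    (integrable_empRisk (f := fun _ => wstar) hlossw), integral_empRisk (f := Prod.fst) hloss,
    integral_empRisk (f := fun _ => wstar) hlossw, ← mul_sub, ← Finset.sum_sub_distrib]
  congr 1
  refine Finset.sum_congr rfl fun i _ => ?_
  rw [integral_jointLaw (integrable_excessLoss_jointLaw hmarg hintw (hinti i)).1,
    integral_sub (hloss i) (hlossw i)]

end Learning

theorem intermediate_rate_bound_general
    (μ : Measure Z) [IsProbabilityMeasure μ] (n : ℕ) (hn : 0 < n)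
    (P : Measure (W × (Fin n → Z))) [IsProbabilityMeasure P]
    (hmarg : P.map Prod.snd = Measure.pi fun _ : Fin n => μ)
    (ℓ : W × Z → ℝ) (wstar : W)
    (hint : Integrable ℓ ((P.map Prod.fst).prod μ))
    (hinti : ∀ i : Fin n, Integrable ℓ (jointLaw P i))
    (hintw : Integrable (fun z => ℓ (wstar, z)) μ)
    (hac : ∀ i : Fin n, jointLaw P i ≪ (P.map Prod.fst).prod μ)
    (hIfin : ∀ i : Fin n, Integrable (llr (jointLaw P i) ((P.map Prod.fst).prod μ))
      (jointLaw P i))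
    (c β : ℝ) (hc : 0 < c) (hβ1 : β < 1)
    (hmgfInt : ∀ ε : ℝ, 0 < ε →
      Integrable (fun p => Real.exp (-(ε ^ (1 - β)) * (ℓ p - ℓ (wstar, p.2))))
        ((P.map Prod.fst).prod μ))
    (hcentral : ∀ ε : ℝ, 0 < ε →
      Real.log (∫ p, Real.exp (-(ε ^ (1 - β)) * (ℓ p - ℓ (wstar, p.2)))
          ∂((P.map Prod.fst).prod μ)) ≤
        -c * ε ^ (1 - β) * excessRisk μ P ℓ wstar + ε ^ (2 - β)) :
    genErr μ n P ℓ ≤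
      ((1 - c) / c) * empExcess n P ℓ wstar +
        ((1 - β) ^ ((1 : ℝ) / (2 - β)) * (2 - β) / (c * (1 - β))) *
          ((1 / (n : ℝ)) * ∑ i : Fin n, mutInfo μ P i ^ ((1 : ℝ) / (2 - β))) := by
  set R := excessRisk μ P ℓ wstar
  set Remp := empExcess n P ℓ wstar with hRemp
  set C := (1 - β) ^ ((1 : ℝ) / (2 - β)) * (2 - β) / (1 - β)
  set A := (1 / (n : ℝ)) * ∑ i : Fin n, mutInfo μ P i ^ ((1 : ℝ) / (2 - β)) with hA
  have : IsProbabilityMeasure (P.map Prod.fst) := Measure.isProbabilityMeasure_map (by fun_prop)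
  have hbound : ∀ i, c * R - ∫ p, (ℓ p - ℓ (wstar, p.2)) ∂(jointLaw P i) ≤
      C * mutInfo μ P i ^ ((1 : ℝ) / (2 - β)) := fun i =>
    have : IsProbabilityMeasure (jointLaw P i) :=
      Measure.isProbabilityMeasure_map (measurable_fst_prodMk_eval_snd i).aemeasurable
    mul_sub_integral_le_of_central (hac i) (hIfin i)
      (integrable_excessLoss_jointLaw hmarg hintw (hinti i)) hβ1 hmgfInt hcentral
  have havg : c * R - Remp ≤ C * A := by
    have hsum := Finset.sum_le_sum fun i (_ : i ∈ Finset.univ) => hbound i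
    rw [Finset.sum_sub_distrib, Finset.sum_const, Finset.card_univ, Fintype.card_fin,
      nsmul_eq_mul, ← Finset.mul_sum] at hsum
    have hn' : (0 : ℝ) < n := by exact_mod_cast hn
    rw [hRemp, empExcess_eq_average hmarg hinti hintw, hA]
    field_simp
    linarith
  rw [genErr_eq_excessRisk_sub_empExcess hn hmarg hint hinti hintw]
  calc R - Remp = ((c * R - Remp) + (1 - c) * Remp) / c := by field_simp; ring
    _ ≤ (C * A + (1 - c) * Remp) / c := by gcongr
    _ = _ := by field_simp; ring

theorem intermediate_rate_bound
    (μ : Measure Z) [IsProbabilityMeasure μ] (n : ℕ) (hn : 0 < n)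
    (P : Measure (W × (Fin n → Z))) [IsProbabilityMeasure P]
    (hmarg : P.map Prod.snd = Measure.pi fun _ : Fin n => μ)
    (ℓ : W × Z → ℝ) (hℓ : Measurable ℓ) (wstar : W)
    (hint : Integrable ℓ ((P.map Prod.fst).prod μ))
    (hinti : ∀ i : Fin n, Integrable ℓ (jointLaw P i))
    (hintw : Integrable (fun z => ℓ (wstar, z)) μ)
    (hac : ∀ i : Fin n, jointLaw P i ≪ (P.map Prod.fst).prod μ)
    (hIfin : ∀ i : Fin n, Integrable (llr (jointLaw P i) ((P.map Prod.fst).prod μ))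
      (jointLaw P i))
    (c β : ℝ) (hc : 0 < c) (hc1 : c < 1) (hβ0 : 0 ≤ β) (hβ1 : β < 1)
    (hR : 0 < excessRisk μ P ℓ wstar)
    (hmgfInt : ∀ ε : ℝ, 0 < ε →
      Integrable (fun p => Real.exp (-(ε ^ (1 - β)) * (ℓ p - ℓ (wstar, p.2))))
        ((P.map Prod.fst).prod μ))
    (hcentral : ∀ ε : ℝ, 0 < ε →
      Real.log (∫ p, Real.exp (-(ε ^ (1 - β)) * (ℓ p - ℓ (wstar, p.2)))
          ∂((P.map Prod.fst).prod μ)) ≤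
        -c * ε ^ (1 - β) * excessRisk μ P ℓ wstar + ε ^ (2 - β)) :
    genErr μ n P ℓ ≤
      ((1 - c) / c) * empExcess n P ℓ wstar +
        ((1 - β) ^ ((1 : ℝ) / (2 - β)) * (2 - β) / (c * (1 - β))) *
          ((1 / (n : ℝ)) * ∑ i : Fin n, mutInfo μ P i ^ ((1 : ℝ) / (2 - β))) :=
  intermediate_rate_bound_general μ n hn P hmarg ℓ wstar hint hinti hintw hac hIfin c β hc hβ1
    hmgfInt hcentral
end

section
/- Expected Bernstein inequality: let (Ω, Q) be a probability space and let U : Ω → ℝ be square-integrable with U ≥ −b Q-almost surely for some b > 0. Define κ(x) := (e^x − x − 1)/x² for x ≠ 0. Then for every η > 0 and every constant c_η ≥ κ(η·b), one has log E_Q[exp(η·(E_Q[U] − U))] ≤ η²·c_η·E_Q[U²]. -/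
/-!
With `z = -η U ≤ η b`, the pointwise inequality `e^z ≤ 1 + z + κ(η b) z²` holds: for `z > 0`
compare the series `e^z - z - 1 = ∑ z^(n+2)/(n+2)!` termwise with `κ(c) c² = ∑ c^(n+2)/(n+2)!`,
and for `z ≤ 0` use `e^z ≤ 1 + z + z²/2` and `κ(c) ≥ 1/2`. Taking expectations and using
`1 + x ≤ e^x` gives `E[e^Y] ≤ exp(E[Y] + c_η E[Y²])` for `Y = -η U`; the centring factor
`exp(-E[Y])` comes out of the integral.
-/

open MeasureTheory Real

noncomputable def kappa (x : ℝ) : ℝ := (Real.exp x - x - 1) / x ^ 2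

open scoped Nat

lemma hasSum_pow_add_two_div_factorial (z : ℝ) :
    HasSum (fun n : ℕ => z ^ (n + 2) / (n + 2)!) (exp z - z - 1) := by
  have h := (hasSum_nat_add_iff' 2).mpr (NormedSpace.expSeries_div_hasSum_exp z)
  have h2 : ∑ i ∈ Finset.range 2, z ^ i / i ! = 1 + z := by simp [Finset.sum_range_succ]
  rwa [← Real.exp_eq_exp_ℝ, h2, sub_add_eq_sub_sub_swap] at h

lemma hasSum_kappa {c : ℝ} (hc : c ≠ 0) :
    HasSum (fun n : ℕ => c ^ n / (n + 2)!) (kappa c) := by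
  refine ((hasSum_pow_add_two_div_factorial c).div_const (c ^ 2)).congr_fun fun n => ?_
  rw [pow_add]
  field_simp

lemma one_half_le_kappa {c : ℝ} (hc : 0 < c) : 1 / 2 ≤ kappa c := by
  simpa using le_hasSum (hasSum_kappa hc.ne') 0 fun n _ => by positivity

lemma exp_le_quadratic_of_nonpos {z : ℝ} (hz : z ≤ 0) : exp z ≤ 1 + z + z ^ 2 / 2 := by
  have hanti : Antitone fun x : ℝ => 1 + x + x ^ 2 / 2 - exp x := by
    refine antitone_of_deriv_nonpos (by fun_prop) fun x => ?_
    have hd : HasDerivAt (fun x : ℝ => 1 + x + x ^ 2 / 2 - exp x) (1 + x - exp x) x :=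
      ((((hasDerivAt_id x).const_add 1).add ((hasDerivAt_pow 2 x).div_const 2)).sub
        (hasDerivAt_exp x)).congr_deriv (by norm_num)
    rw [hd.deriv]
    linarith [add_one_le_exp x]
  simpa using hanti hz

lemma exp_le_one_add_add_kappa_mul_sq {c z : ℝ} (hc : 0 < c) (hz : z ≤ c) :
    exp z ≤ 1 + z + kappa c * z ^ 2 := by
  rcases le_or_gt z 0 with hz0 | hz0
  · nlinarith [exp_le_quadratic_of_nonpos hz0, one_half_le_kappa hc, sq_nonneg z]
  · have hterm (n : ℕ) : z ^ (n + 2) / (n + 2)! ≤ z ^ 2 * (c ^ n / (n + 2)!) := by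
      rw [pow_add, mul_comm, mul_div_assoc]
      gcongr
    have := hasSum_le hterm (hasSum_pow_add_two_div_factorial z) ((hasSum_kappa hc.ne').mul_left _)
    linarith

lemma log_integral_exp_sub_integral_le {Ω : Type*} [MeasurableSpace Ω] {μ : Measure Ω}
    [IsProbabilityMeasure μ] {Y : Ω → ℝ} (hY : MemLp Y 2 μ) {k : ℝ}
    (hexp : ∀ᵐ ω ∂μ, exp (Y ω) ≤ 1 + Y ω + k * Y ω ^ 2) :
    log (∫ ω, exp (Y ω - ∫ ω', Y ω' ∂μ) ∂μ) ≤ k * ∫ ω, Y ω ^ 2 ∂μ := by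
  set m := ∫ ω, Y ω ∂μ
  have hY1 : Integrable Y μ := hY.integrable one_le_two
  have hbound : Integrable (fun ω => 1 + Y ω + k * Y ω ^ 2) μ :=
    ((integrable_const 1).add hY1).add (hY.integrable_sq.const_mul k)
  have hexp_int : Integrable (fun ω => exp (Y ω)) μ := by
    refine hbound.mono' (continuous_exp.comp_aestronglyMeasurable hY.1) ?_
    filter_upwards [hexp] with ω hω
    rwa [norm_of_nonneg (exp_pos _).le]
  have hpos : 0 < ∫ ω, exp (Y ω) ∂μ := integral_exp_pos hexp_int
  have hle : ∫ ω, exp (Y ω) ∂μ ≤ exp (m + k * ∫ ω, Y ω ^ 2 ∂μ) :=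
    calc ∫ ω, exp (Y ω) ∂μ ≤ ∫ ω, (1 + Y ω + k * Y ω ^ 2) ∂μ :=
          integral_mono_ae hexp_int hbound hexp
      _ = m + k * ∫ ω, Y ω ^ 2 ∂μ + 1 := by
        rw [integral_add (f := fun ω => 1 + Y ω) ((integrable_const 1).add hY1)
            (hY.integrable_sq.const_mul k), integral_add (integrable_const 1) hY1,
          integral_const_mul]
        simp only [integral_const, probReal_univ, smul_eq_mul, one_mul]
        ring
      _ ≤ exp (m + k * ∫ ω, Y ω ^ 2 ∂μ) := add_one_le_exp _
  have hshift : ∫ ω, exp (Y ω - m) ∂μ = exp (-m) * ∫ ω, exp (Y ω) ∂μ := by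
    rw [← integral_const_mul]
    simp only [← exp_add, neg_add_eq_sub]
  rw [hshift, log_mul (exp_pos _).ne' hpos.ne', log_exp]
  linarith [(log_le_iff_le_exp hpos).2 hle]

/-- **Expected Bernstein inequality.** If `U` is square-integrable and `U ≥ −b` almost
surely, then for every `η > 0` and every `c_η ≥ κ(η·b)`,
`log E[exp(η·(E[U] − U))] ≤ η²·c_η·E[U²]`. -/
theorem expected_bernstein
    {Ω : Type*} [MeasurableSpace Ω] (Q : Measure Ω) [IsProbabilityMeasure Q]
    (U : Ω → ℝ) (hU2 : MemLp U 2 Q)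
    (b : ℝ) (hb : 0 < b) (hUb : ∀ᵐ ω ∂Q, -b ≤ U ω) :
    ∀ η : ℝ, 0 < η → ∀ cη : ℝ, kappa (η * b) ≤ cη →
      Real.log (∫ ω, Real.exp (η * ((∫ ω', U ω' ∂Q) - U ω)) ∂Q) ≤
        η ^ 2 * cη * ∫ ω, (U ω) ^ 2 ∂Q := by
  intro η hη cη hcη
  have hexp : ∀ᵐ ω ∂Q, exp (-η * U ω) ≤ 1 + -η * U ω + cη * (-η * U ω) ^ 2 := by
    filter_upwards [hUb] with ω hω
    have hz : -η * U ω ≤ η * b := by nlinarith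
    calc exp (-η * U ω) ≤ 1 + -η * U ω + kappa (η * b) * (-η * U ω) ^ 2 :=
          exp_le_one_add_add_kappa_mul_sq (mul_pos hη hb) hz
      _ ≤ 1 + -η * U ω + cη * (-η * U ω) ^ 2 := by gcongr
  have key := log_integral_exp_sub_integral_le (hU2.const_mul (-η)) hexp
  simp only [integral_const_mul, mul_pow, neg_sq] at key
  calc _ = log (∫ ω, exp (-η * U ω - -η * ∫ ω', U ω' ∂Q) ∂Q) := by
        congr 2 with ω
        ring_nf
    _ ≤ _ := key
    _ = _ := by ring
end
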